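/- Let q be a prime, G an additive commutative group that is a module over ZMod q, h an element of G, sk : Fin n → ZMod q a family of evaluator keys, and r, r' nonzero elements of ZMod q. Define the publisher's call secret csk = r⁻¹ • (∑ j, sk j • (r • h)) and the retriever's call secret csk' = r'⁻¹ • (∑ j, sk j • (r' • h)). Then for every index-derivation function idx : G → ℕ, every key-derivation function kdf : (BitVec λ × G) → BitVec ℓ, every nonce c₀ : BitVec λ, and every message msg : BitVec ℓ, we have idx csk' = idx csk and BitVec.xor (BitVec.xor msg (kdf (c₀, csk))) (kdf (c₀, csk')) = msg; i.e., the retrieving provider locates the record at the same index as the publisher and decrypts the one-time-pad ciphertext to recover exactly the published message (functional correctness F2 of Record Publish/Retrieval). -/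
import Mathlib

lemma csk_eq {q : ℕ} [Fact (Nat.Prime q)] {G : Type*} [AddCommGroup G]
    [Module (ZMod q) G] (h : G) {n : ℕ} (sk : Fin n → ZMod q)
    {r : ZMod q} (hr : r ≠ 0) :
    r⁻¹ • (∑ j, sk j • (r • h)) = ∑ j, sk j • h := by
  rw [Finset.smul_sum]
  refine Finset.sum_congr rfl fun j _ => ?_
  rw [smul_comm, inv_smul_smul₀ hr]

/-- Functional correctness (F2) of Record Publish/Retrieval: the retrieving
provider locates the record at the same index as the publisher, and
one-time-pad decryption recovers exactly the published message. -/
theorem record_publish_retrieve_correct (q : ℕ) [Fact (Nat.Prime q)]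
    (G : Type*) [AddCommGroup G] [Module (ZMod q) G]
    (h : G) (n : ℕ) (sk : Fin n → ZMod q)
    (r r' : ZMod q) (hr : r ≠ 0) (hr' : r' ≠ 0)
    (csk csk' : G)
    (hcsk : csk = r⁻¹ • (∑ j, sk j • (r • h)))
    (hcsk' : csk' = r'⁻¹ • (∑ j, sk j • (r' • h)))
    (lam ℓ : ℕ) (idx : G → ℕ) (kdf : BitVec lam × G → BitVec ℓ)
    (c₀ : BitVec lam) (msg : BitVec ℓ) :
    idx csk' = idx csk ∧
    BitVec.xor (BitVec.xor msg (kdf (c₀, csk))) (kdf (c₀, csk')) = msg := by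
  have e : csk = csk' := by rw [hcsk, hcsk', csk_eq h sk hr, csk_eq h sk hr']
  subst e
  refine ⟨rfl, ?_⟩
  simp [BitVec.xor_assoc]
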